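/- arXiv:2510.27314 — 2 statements merged into one kernel-verified Lean document; each statement's English description precedes it below -/
import Mathlib

section
/- For the homogeneous leapfrog scheme (f = 0), the quantity E^n = ⟨v^{n+1/2}, v^{n+1/2}⟩ + ⟨L_h u^n, u^{n+1}⟩ is conserved: E^{n+1} = E^n for all n. -/
open RealInnerProductSpace

/-- Conservation of the shifted discrete energy of the homogeneous leapfrog scheme:
the quantity `Eⁿ = ⟨vⁿ⁺¹ᐟ², vⁿ⁺¹ᐟ²⟩ + ⟨L_h uⁿ, uⁿ⁺¹⟩` satisfies `Eⁿ⁺¹ = Eⁿ`. -/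
theorem stmt_9 {H : Type*} [NormedAddCommGroup H] [InnerProductSpace ℝ H]
    [FiniteDimensional ℝ H]
    (Lh : H →ₗ[ℝ] H)
    (hsym : ∀ x y : H, ⟪Lh x, y⟫ = ⟪x, Lh y⟫)
    (hpsd : ∀ x : H, 0 ≤ ⟪Lh x, x⟫)
    (τ : ℝ) (hτ : 0 < τ)
    (u0 u1 u2 v0 v1 vh0 vh1 : H)
    -- step n: (u0, v0) ↦ (u1, v1) with half-step velocity vh0
    (h0a : vh0 = v0 - (τ / 2) • Lh u0)
    (h0b : u1 = u0 + τ • vh0)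
    (h0c : v1 = vh0 - (τ / 2) • Lh u1)
    -- step n+1: half-step velocity vh1 and u2
    (h1a : vh1 = v1 - (τ / 2) • Lh u1)
    (h1b : u2 = u1 + τ • vh1) :
    ⟪vh1, vh1⟫ + ⟪Lh u1, u2⟫ = ⟪vh0, vh0⟫ + ⟪Lh u0, u1⟫ := by
  subst h0b h0c h1a h1b
  simp only [map_add, map_smul, map_sub, inner_add_left, inner_add_right,
    inner_sub_left, inner_sub_right, real_inner_smul_left, real_inner_smul_right,
    hsym]
  ring
end

section
/- If a mesh is shape- and contact-regular so that every cell has diameter between c·h and h for a constant c ∈ (0,1], then the ℓ-layer extension of a subdomain increases the subdomain's physical extent by at most 2ℓh: every point of dom(N_ℓ(T[Ω̂])) is within distance 2ℓh of the closure of Ω̂. -/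
/-- The `j`-layer cell extension of a subset of cells. -/
def cellExt {d : ℕ} (T : Set (Set (EuclideanSpace ℝ (Fin d)))) :
    ℕ → Set (Set (EuclideanSpace ℝ (Fin d))) → Set (Set (EuclideanSpace ℝ (Fin d)))
  | 0, T₀ => T₀
  | j + 1, T₀ =>
      {K | K ∈ T ∧ ∃ Kstar ∈ cellExt T j T₀, (closure K ∩ closure Kstar).Nonempty}

/-- The domain associated with a collection of cells. -/
def domOf {d : ℕ} (S : Set (Set (EuclideanSpace ℝ (Fin d)))) :
    Set (EuclideanSpace ℝ (Fin d)) :=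
  interior (⋃ K ∈ S, closure K)

/-- If every cell of the mesh has diameter at most `h` and `c·h ≤ diam K` for a
shape-regularity constant `c ∈ (0,1]`, then the `ℓ`-layer extension of a subdomain `Ω̂`
increases its physical extent by at most `2ℓh`: every point of `dom(N_ℓ(T[Ω̂]))` lies
within distance `2ℓh` of the closure of `Ω̂`. -/
theorem stmt_13 {d : ℕ}
    (T : Set (Set (EuclideanSpace ℝ (Fin d)))) (hTfin : T.Finite)
    (h c : ℝ) (hh : 0 < h) (hc0 : 0 < c) (hc1 : c ≤ 1)
    (hcells : ∀ K ∈ T, K.Nonempty ∧ c * h ≤ Metric.diam K ∧ Metric.diam K ≤ h)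
    (Ωhat : Set (EuclideanSpace ℝ (Fin d))) (ℓ : ℕ) :
    ∀ x ∈ domOf (cellExt T ℓ {K | K ∈ T ∧ K ⊆ Ωhat}),
      Metric.infDist x (closure Ωhat) ≤ 2 * ℓ * h := by
  have key : ∀ n : ℕ, ∀ K ∈ cellExt T n {K | K ∈ T ∧ K ⊆ Ωhat},
      ∀ x ∈ closure K, Metric.infDist x (closure Ωhat) ≤ 2 * n * h := by
    intro n
    induction n with
    | zero =>
      intro K hK x hx
      simp only [cellExt, Set.mem_setOf_eq] at hK
      have : x ∈ closure Ωhat := closure_mono hK.2 hx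
      simp [Metric.infDist_zero_of_mem this]
    | succ m ih =>
      intro K hK x hx
      obtain ⟨hKT, Kstar, hKstar, y, hy1, hy2⟩ := hK
      obtain ⟨hKne, hKd1, hKd2⟩ := hcells K hKT
      have hKbdd : Bornology.IsBounded K := by
        by_contra hb
        rw [Metric.diam_eq_zero_of_unbounded hb] at hKd1
        nlinarith
      have hdxy : dist x y ≤ h := by
        calc dist x y ≤ Metric.diam (closure K) :=
              Metric.dist_le_diam_of_mem hKbdd.closure hx hy1
          _ = Metric.diam K := Metric.diam_closure K
          _ ≤ h := hKd2
      have := ih Kstar hKstar y hy2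
      calc Metric.infDist x (closure Ωhat)
          ≤ Metric.infDist y (closure Ωhat) + dist x y :=
            Metric.infDist_le_infDist_add_dist
        _ ≤ 2 * m * h + h := by linarith
        _ ≤ 2 * (m + 1 : ℕ) * h := by push_cast; nlinarith
  intro x hx
  have hx' : x ∈ ⋃ K ∈ cellExt T ℓ {K | K ∈ T ∧ K ⊆ Ωhat}, closure K :=
    interior_subset hx
  obtain ⟨K, hK, hxK⟩ := Set.mem_iUnion₂.mp hx'
  exact key ℓ K hK x hxK
end
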